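/- Let (X,d) be a metric space satisfying the semiparallelogram law, and let B, B' be nonempty bounded subsets with circumcenters σ, σ' and equal circumradius r. If the Hausdorff distance between B and B' is at most ε, then d(σ, σ')^2 ≤ 4 r ε + 2 ε^2 + 2(r(B')^2 - r(B)^2) whenever the right-hand side is nonnegative; in particular the circumcenter depends continuously on the set in Hausdorff distance when circumradii are equal. -/
import Mathlib


open Metric

variable {X : Type*} [MetricSpace X]

/-- Supremum of distances from `x` to points of `B`. -/
noncomputable def supDist (B : Set X) (x : X) : ℝ := ⨆ y : B, dist x (y : X)

/-- The circumradius of `B`. -/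
noncomputable def circumradius (B : Set X) : ℝ := ⨅ x : X, supDist B x

/-- `x` is a circumcenter of `B`. -/
def IsCircumcenter (B : Set X) (x : X) : Prop := ∀ y ∈ B, dist x y ≤ circumradius B

/-- The semiparallelogram law. -/
def SemiparLaw (X : Type*) [MetricSpace X] : Prop :=
  ∀ x1 x2 : X, ∃ z : X, ∀ x : X,
    dist x1 x2 ^ 2 + 4 * dist z x ^ 2 ≤ 2 * dist x x1 ^ 2 + 2 * dist x x2 ^ 2

lemma supDist_nonneg (B : Set X) (hne : B.Nonempty) (x : X) : 0 ≤ supDist B x := by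
  have : Nonempty B := hne.to_subtype
  exact Real.iSup_nonneg fun y => dist_nonneg

lemma circumradius_le_supDist (B : Set X) (hne : B.Nonempty) (x : X) :
    circumradius B ≤ supDist B x :=
  ciInf_le ⟨0, by rintro _ ⟨y, rfl⟩; exact supDist_nonneg B hne y⟩ x

/-- Circumcenters of Hausdorff-close bounded sets with equal circumradius are close. -/
theorem stmt16 (hX : SemiparLaw X) (B B' : Set X) (hne : B.Nonempty) (hne' : B'.Nonempty)
    (hbd : Bornology.IsBounded B) (hbd' : Bornology.IsBounded B')
    (σ σ' : X) (hσ : IsCircumcenter B σ) (hσ' : IsCircumcenter B' σ')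
    (r : ℝ) (hr : circumradius B = r) (hr' : circumradius B' = r)
    (ε : ℝ) (hε : 0 ≤ ε) (hH : Metric.hausdorffDist B B' ≤ ε)
    (hpos : 0 ≤ 4 * r * ε + 2 * ε ^ 2 + 2 * (circumradius B' ^ 2 - circumradius B ^ 2)) :
    dist σ σ' ^ 2 ≤
      4 * r * ε + 2 * ε ^ 2 + 2 * (circumradius B' ^ 2 - circumradius B ^ 2) := by
  rw [hr, hr']
  have hr0 : 0 ≤ r := by
    obtain ⟨y, hy⟩ := hne
    exact dist_nonneg.trans (hr ▸ hσ y hy)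
  have hedist : EMetric.hausdorffEdist B B' ≠ ⊤ :=
    Metric.hausdorffEdist_ne_top_of_nonempty_of_bounded hne hne' hbd hbd'
  obtain ⟨z, hz⟩ := hX σ σ'
  have key : ∀ δ : ℝ, 0 < δ →
      dist σ σ' ^ 2 ≤ 4 * r * ε + 2 * ε ^ 2 + δ * (12 * r + 4 * ε + 2 * δ) := by
    intro δ hδ
    have hsup : r - δ < supDist B z := by
      have := circumradius_le_supDist B hne z
      linarith [hr ▸ this]
    have : Nonempty B := hne.to_subtype
    obtain ⟨⟨x, hxB⟩, hx⟩ := exists_lt_of_lt_ciSup hsup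
    simp only at hx
    have hxσ : dist x σ ≤ r := by rw [dist_comm]; exact hr ▸ hσ x hxB
    obtain ⟨x', hx'B', hxx'⟩ :=
      Metric.exists_dist_lt_of_hausdorffDist_lt hxB
        (show Metric.hausdorffDist B B' < ε + δ from lt_of_le_of_lt hH (by linarith)) hedist
    have hxσ' : dist x σ' ≤ r + (ε + δ) := by
      have h1 : dist x' σ' ≤ r := by rw [dist_comm]; exact hr' ▸ hσ' x' hx'B'
      calc dist x σ' ≤ dist x x' + dist x' σ' := dist_triangle _ _ _
        _ ≤ (ε + δ) + r := by linarith
        _ = r + (ε + δ) := by ring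
    have hzx : 0 ≤ dist z x := dist_nonneg
    have hmain := hz x
    have hb1 : dist x σ ^ 2 ≤ r ^ 2 := by nlinarith [dist_nonneg (x := x) (y := σ)]
    have hb2 : dist x σ' ^ 2 ≤ (r + (ε + δ)) ^ 2 := by
      nlinarith [dist_nonneg (x := x) (y := σ'), add_nonneg hr0 (add_nonneg hε hδ.le)]
    rcases le_or_gt 0 (r - δ) with hc | hc
    · have hb3 : (r - δ) ^ 2 ≤ dist z x ^ 2 := by nlinarith
      nlinarith [mul_nonneg hr0 hδ.le, mul_nonneg hε hδ.le, sq_nonneg δ]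
    · nlinarith [sq_nonneg (dist z x), mul_nonneg hε hδ.le, sq_nonneg δ,
        mul_nonneg hr0 hδ.le]
  have final : dist σ σ' ^ 2 ≤ 4 * r * ε + 2 * ε ^ 2 := by
    refine le_of_forall_pos_le_add fun η hη => ?_
    have hden : 0 < 12 * r + 4 * ε + 2 := by linarith
    set δ := min 1 (η / (12 * r + 4 * ε + 2)) with hδdef
    have hδpos : 0 < δ := lt_min one_pos (div_pos hη hden)
    have hδ1 : δ ≤ 1 := min_le_left _ _
    have hδ2 : δ ≤ η / (12 * r + 4 * ε + 2) := min_le_right _ _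
    have h := key δ hδpos
    have : δ * (12 * r + 4 * ε + 2 * δ) ≤ η := by
      have h1 : δ * (12 * r + 4 * ε + 2 * δ) ≤ δ * (12 * r + 4 * ε + 2) := by nlinarith
      have h2 : δ * (12 * r + 4 * ε + 2) ≤ η := by
        rw [le_div_iff₀ hden] at hδ2; linarith
      linarith
    linarith
  linarith
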